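/- arXiv:1102.1432 — 7 statements merged into one kernel-verified Lean document; each statement's English description precedes it below -/
import Mathlib

section
/- Let L be a field of characteristic p > 0 and let f, g ∈ L[X] be coprime polynomials. Then the Wronskian f'·g −ف·g' is the zero polynomial if and only if there exist polynomials f₁, g₁ ∈ L[X] with f(X) = f₁(X^p) and g(X) = g₁(X^p) (i.e., f and g both lie in the image of the p-th power expansion map). Equivalently: the rational function f/g is inseparable if and only if its derivative vanishes identically. -/
open Polynomial

/-- For coprime polynomials `f, g` over a field of characteristic `p > 0`, the Wronskian
`f'·g − f·g'` vanishes identically if and only if both `f` and `g` are polynomials in `X^p`,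
i.e. the rational function `f/g` is inseparable. -/
theorem wronskian_eq_zero_iff_inseparable {L : Type*} [Field L] (p : ℕ) [CharP L p]
    (hp : 0 < p) (f g : L[X]) (hfg : IsCoprime f g) :
    derivative f * g - f * derivative g = 0 ↔
      ∃ f₁ g₁ : L[X], f = expand L p f₁ ∧ g = expand L p g₁ := by
  constructor
  · intro h
    have h' : derivative f * g = f * derivative g := by linear_combination h
    -- f ∣ derivative f
    have key : ∀ (a b : L[X]), IsCoprime a b → a ∣ derivative a → derivative a = 0 := by
      intro a b hab hdvd
      by_contra hne
      rcases eq_or_ne a 0 with rfl | ha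
      · simp at hne
      · exact absurd (Polynomial.degree_le_of_dvd hdvd hne)
          (not_le.mpr (Polynomial.degree_derivative_lt ha))
    have hf0 : derivative f = 0 := by
      refine key f g hfg ?_
      exact hfg.dvd_of_dvd_mul_right ⟨derivative g, h'⟩
    have hg0 : derivative g = 0 := by
      refine key g f hfg.symm ?_
      refine hfg.symm.dvd_of_dvd_mul_right ?_
      exact ⟨derivative f, by linear_combination -h⟩
    exact ⟨contract p f, contract p g,
      (Polynomial.expand_contract p hf0 hp.ne').symm,
      (Polynomial.expand_contract p hg0 hp.ne').symm⟩
  · rintro ⟨f₁, g₁, rfl, rfl⟩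
    have hpz : (p : L[X]) = 0 := by
      have : (p : L) = 0 := CharP.cast_eq_zero L p
      simp [this]
    rw [Polynomial.derivative_expand, Polynomial.derivative_expand, hpz]
    ring
end

section
/- (Hurwitz formula, affine normalized form.) Let L be an algebraically closed field, let d ≥ 1 be an integer, and let f, g ∈ L[X] be coprime polynomials with natDegree f = d and natDegree g = d − 1 (so that the rational function φ = f/g has degree d and fixes ∞ with ∞ not a critical point). Then the Wronskian W = f'·g − f·g' is nonzero and the multiset of roots of W in L has cardinality 2d − 2; that is, the sum over all x ∈ L of the weights w_φ(x) = rootMultiplicity x W equals 2·deg(φ) − 2. -/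
open Polynomial

/-! The Wronskian `f'·g − f·g'` is `wronskian g f`. When `deg f = deg g + 1`, the top terms of
`g·f'` and `g'·f` in degree `2·deg g` are `(deg g + 1)·lc f·lc g` and `deg g·lc f·lc g`, so they do
not cancel: the Wronskian has degree exactly `2d − 2` with leading coefficient `lc f·lc g`, and over
an algebraically closed field it has that many roots with multiplicity. -/

namespace Polynomial

variable {R : Type*}

theorem coeff_derivative_mul_of_natDegree_le [Semiring R] {a b : R[X]} {m n : ℕ}
    (ha : a.natDegree ≤ m + 1) (hb : b.natDegree ≤ n) :
    (derivative a * b).coeff (m + n) = a.coeff (m + 1) * (m + 1 : R) * b.coeff n := by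
  have had : (derivative a).natDegree ≤ m := (natDegree_derivative_le a).trans (by omega)
  rw [coeff_mul_add_eq_of_natDegree_le had hb, coeff_derivative]

variable [CommRing R]

theorem coeff_wronskian_of_natDegree_le {a b : R[X]} {m n : ℕ}
    (ha : a.natDegree ≤ m) (hb : b.natDegree ≤ n + 1) :
    (wronskian a b).coeff (m + n) = ((n + 1 : R) - m) * a.coeff m * b.coeff (n + 1) := by
  have hab : (a * derivative b).coeff (m + n) = b.coeff (n + 1) * (n + 1 : R) * a.coeff m := by
    rw [mul_comm, add_comm, coeff_derivative_mul_of_natDegree_le hb ha]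
  rw [wronskian, coeff_sub, hab]
  cases m with
  | zero =>
    rw [eq_C_of_natDegree_le_zero ha, derivative_C, zero_mul, coeff_zero]
    simp only [coeff_C_zero, Nat.cast_zero]
    ring
  | succ m =>
    rw [show m + 1 + n = m + (n + 1) by omega, coeff_derivative_mul_of_natDegree_le ha hb]
    push_cast
    ring

theorem natDegree_wronskian_le {a b : R[X]} {m n : ℕ}
    (ha : a.natDegree ≤ m) (hb : b.natDegree ≤ n + 1) :
    (wronskian a b).natDegree ≤ m + n := by
  by_cases hw : wronskian a b = 0
  · simp [hw]
  · have := natDegree_wronskian_lt_add hw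
    omega

theorem coeff_wronskian_of_natDegree_eq_succ {a b : R[X]} (hab : b.natDegree = a.natDegree + 1) :
    (wronskian a b).coeff (2 * a.natDegree) = a.leadingCoeff * b.leadingCoeff := by
  rw [two_mul, coeff_wronskian_of_natDegree_le le_rfl hab.le, ← hab]
  simp only [leadingCoeff, add_sub_cancel_left, one_mul]

theorem natDegree_wronskian_of_natDegree_eq_succ [IsDomain R] {a b : R[X]} (ha : a ≠ 0)
    (hab : b.natDegree = a.natDegree + 1) :
    wronskian a b ≠ 0 ∧ (wronskian a b).natDegree = 2 * a.natDegree := by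
  have hb : b ≠ 0 := by
    rintro rfl
    simp at hab
  have hlc : (wronskian a b).coeff (2 * a.natDegree) ≠ 0 := by
    rw [coeff_wronskian_of_natDegree_eq_succ hab]
    exact mul_ne_zero (leadingCoeff_ne_zero.mpr ha) (leadingCoeff_ne_zero.mpr hb)
  refine ⟨fun hw => hlc (by rw [hw, coeff_zero]), le_antisymm ?_ (le_natDegree_of_ne_zero hlc)⟩
  rw [two_mul]
  exact natDegree_wronskian_le le_rfl hab.le

end Polynomial

/-- Hurwitz formula, affine normalized form: over an algebraically closed field, if `f, g` are
coprime with `deg f = d ≥ 1` and `deg g = d − 1` (so `φ = f/g` has degree `d` and fixes `∞`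
with `∞` not critical), then the Wronskian `W = f'·g − f·g'` is nonzero and its multiset of
roots has cardinality `2d − 2`; i.e. the total weight of the critical points is `2·deg φ − 2`. -/
theorem hurwitz_formula_affine {L : Type*} [Field L] [IsAlgClosed L] (d : ℕ) (hd : 1 ≤ d)
    (f g : L[X]) (hfg : IsCoprime f g) (hf : f.natDegree = d) (hg : g.natDegree = d - 1) :
    derivative f * g - f * derivative g ≠ 0 ∧
    Multiset.card (derivative f * g - f * derivative g).roots = 2 * d - 2 := by
  have hg0 : g ≠ 0 := by
    rintro rfl
    have := natDegree_eq_zero_of_isUnit (isCoprime_zero_right.mp hfg)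
    omega
  have hW : derivative f * g - f * derivative g = wronskian g f := by
    rw [wronskian]
    ring
  obtain ⟨hW0, hdeg⟩ := natDegree_wronskian_of_natDegree_eq_succ hg0 (by omega : f.natDegree = _)
  rw [hW, IsAlgClosed.card_roots_eq_natDegree, hdeg, hg]
  exact ⟨hW0, by omega⟩
end

section
/- (Weight–multiplicity relation.) Let L be a field, let f, g ∈ L[X] be coprime with max(natDegree f, natDegree g) ≥ 1, and let x ∈ L. Set P = C(g.eval x)·f − C(f.eval x)·g (which is a nonzero polynomial vanishing at x), let m = rootMultiplicity x P (so m ≥ 1), and let W = f'·g − f·g' be the Wronskian. Then: (a) if the image of m in L is nonzero (i.e., char L does not divide m), then W ≠ 0 and rootMultiplicity x W = m − 1; (b) if the image of m in L is zero (i.e., char L = p > 0 and p divides m), then (X − x)^m divides W. -/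
open Polynomial

lemma wmr_aux {L : Type*} [Field L] (P W h : L[X]) (x : L) (hP : P ≠ 0)
    (hhx : h.eval x ≠ 0)
    (hid : C (h.eval x) * W = derivative P * h - P * derivative h) :
    (((rootMultiplicity x P : ℕ) : L) ≠ 0 →
        W ≠ 0 ∧ rootMultiplicity x W = rootMultiplicity x P - 1) ∧
    (((rootMultiplicity x P : ℕ) : L) = 0 →
        (X - C x) ^ (rootMultiplicity x P) ∣ W) := by
  obtain ⟨Q, hQ, hQnd⟩ := P.exists_eq_pow_rootMultiplicity_mul_and_not_dvd hP x
  set m := rootMultiplicity x P with hm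
  have hQx : Q.eval x ≠ 0 := fun hz => hQnd (dvd_iff_isRoot.mpr hz)
  have hdP : derivative P = C ((m : L)) * (X - C x) ^ (m - 1) * Q
      + (X - C x) ^ m * derivative Q := by
    rw [hQ, derivative_mul, derivative_pow, derivative_X_sub_C, mul_one]
  have hCc : (C (h.eval x) : L[X]) ≠ 0 := fun hz => hhx (by simpa using congrArg (eval x) hz)
  constructor
  · intro hmL
    have hm1 : 1 ≤ m := Nat.one_le_iff_ne_zero.mpr (by rintro h0; rw [h0] at hmL; simp at hmL)
    set B : L[X] := C ((m : L)) * Q * h + (X - C x) * (derivative Q * h - Q * derivative h)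
      with hB
    have hpow : (X - C x : L[X]) ^ m = (X - C x) ^ (m - 1) * (X - C x) := by
      rw [← pow_succ, Nat.sub_add_cancel hm1]
    have key : C (h.eval x) * W = (X - C x) ^ (m - 1) * B := by
      rw [hid, hdP, hB, hQ, hpow]; ring
    have hBx : B.eval x = (m : L) * Q.eval x * h.eval x := by simp [hB]
    have hBx0 : B.eval x ≠ 0 := by
      rw [hBx]; exact mul_ne_zero (mul_ne_zero hmL hQx) hhx
    have hBne : B ≠ 0 := fun h0 => hBx0 (by rw [h0, eval_zero])
    have hWne : W ≠ 0 := by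
      intro h0
      rw [h0, mul_zero] at key
      rcases mul_eq_zero.mp key.symm with h1 | h1
      · exact pow_ne_zero _ (X_sub_C_ne_zero x) h1
      · exact hBne h1
    refine ⟨hWne, ?_⟩
    have e1 : rootMultiplicity x (C (h.eval x) * W) = rootMultiplicity x W := by
      rw [rootMultiplicity_mul (mul_ne_zero hCc hWne),
        rootMultiplicity_eq_zero (p := C (h.eval x)) (by simp [IsRoot, hhx]), zero_add]
    have e2 : rootMultiplicity x ((X - C x) ^ (m - 1) * B) = m - 1 := by
      rw [rootMultiplicity_mul (mul_ne_zero (pow_ne_zero _ (X_sub_C_ne_zero x)) hBne),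
        rootMultiplicity_X_sub_C_pow,
        rootMultiplicity_eq_zero (p := B) (by simpa [IsRoot] using hBx0), add_zero]
    rw [← e1, key, e2]
  · intro hmL
    have hC0 : (C ((m : L)) : L[X]) = 0 := by rw [hmL, map_zero]
    have hdvd : (X - C x) ^ m ∣ derivative P := by
      rw [hdP, hC0]
      simpa using Dvd.intro _ rfl
    have hdvd2 : (X - C x) ^ m ∣ C (h.eval x) * W := by
      rw [hid]
      exact dvd_sub (hdvd.mul_right h) ((P.pow_rootMultiplicity_dvd x).mul_right _)
    have hWeq : W = C (h.eval x)⁻¹ * (C (h.eval x) * W) := by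
      rw [← mul_assoc, ← C_mul, inv_mul_cancel₀ hhx, C_1, one_mul]
    rw [hWeq]
    exact hdvd2.mul_left _

/-- Weight–multiplicity relation. For `φ = f/g` with `f, g` coprime and `max(deg f, deg g) ≥ 1`,
and `x ∈ L`: let `P = C(g(x))·f − C(f(x))·g` (a nonzero polynomial vanishing at `x`),
`m = rootMultiplicity x P ≥ 1` (the multiplicity of `φ` at `x`), and `W = f'·g − f·g'` the
Wronskian.  If `char L ∤ m` then `W ≠ 0` and `rootMultiplicity x W = m − 1`; if `char L ∣ m`
then `(X − x)^m ∣ W`. -/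
theorem weight_multiplicity_relation {L : Type*} [Field L] (f g : L[X])
    (hfg : IsCoprime f g) (hdeg : 1 ≤ max f.natDegree g.natDegree) (x : L) :
    C (g.eval x) * f - C (f.eval x) * g ≠ 0 ∧
    1 ≤ rootMultiplicity x (C (g.eval x) * f - C (f.eval x) * g) ∧
    (((rootMultiplicity x (C (g.eval x) * f - C (f.eval x) * g) : ℕ) : L) ≠ 0 →
      derivative f * g - f * derivative g ≠ 0 ∧
      rootMultiplicity x (derivative f * g - f * derivative g) =
        rootMultiplicity x (C (g.eval x) * f - C (f.eval x) * g) - 1) ∧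
    (((rootMultiplicity x (C (g.eval x) * f - C (f.eval x) * g) : ℕ) : L) = 0 →
      (X - C x) ^ (rootMultiplicity x (C (g.eval x) * f - C (f.eval x) * g)) ∣
        (derivative f * g - f * derivative g)) := by
  set P : L[X] := C (g.eval x) * f - C (f.eval x) * g with hPdef
  have hnb : f.eval x ≠ 0 ∨ g.eval x ≠ 0 := by
    by_contra hc
    push_neg at hc
    obtain ⟨a, b, hab⟩ := hfg
    have := congrArg (eval x) hab
    simp [hc.1, hc.2] at this
  have hP0 : P ≠ 0 := by
    intro h0
    have heq : C (g.eval x) * f = C (f.eval x) * g := sub_eq_zero.mp (hPdef ▸ h0)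
    rcases hnb with hf | hg
    · have hdvd : f ∣ C (f.eval x) * g := heq ▸ dvd_mul_left f (C (g.eval x))
      have hg' : g = C (f.eval x)⁻¹ * (C (f.eval x) * g) := by
        rw [← mul_assoc, ← C_mul, inv_mul_cancel₀ hf, C_1, one_mul]
      have hdvdg : f ∣ g := hg' ▸ hdvd.mul_left _
      have hu : IsUnit f := hfg.isUnit_of_dvd' dvd_rfl hdvdg
      have h1 : f.natDegree = 0 := natDegree_eq_zero_of_isUnit hu
      have h2 : g.natDegree ≤ f.natDegree := by
        calc g.natDegree = (C (f.eval x) * g).natDegree := by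
              rw [natDegree_C_mul (fun hz => hf hz)]
          _ = (C (g.eval x) * f).natDegree := by rw [heq]
          _ ≤ f.natDegree := natDegree_C_mul_le _ _
      omega
    · have hdvd : g ∣ C (g.eval x) * f := heq ▸ dvd_mul_left g (C (f.eval x))
      have hf' : f = C (g.eval x)⁻¹ * (C (g.eval x) * f) := by
        rw [← mul_assoc, ← C_mul, inv_mul_cancel₀ hg, C_1, one_mul]
      have hdvdf : g ∣ f := hf' ▸ hdvd.mul_left _
      have hu : IsUnit g := hfg.isUnit_of_dvd' hdvdf dvd_rfl
      have h1 : g.natDegree = 0 := natDegree_eq_zero_of_isUnit hu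
      have h2 : f.natDegree ≤ g.natDegree := by
        calc f.natDegree = (C (g.eval x) * f).natDegree := by
              rw [natDegree_C_mul (fun hz => hg hz)]
          _ = (C (f.eval x) * g).natDegree := by rw [heq]
          _ ≤ g.natDegree := natDegree_C_mul_le _ _
      omega
  have hroot : P.eval x = 0 := by simp [hPdef]; ring
  have hm1 : 1 ≤ rootMultiplicity x P := (rootMultiplicity_pos hP0).mpr hroot
  have hdPe : derivative P = C (g.eval x) * derivative f - C (f.eval x) * derivative g := by
    rw [hPdef]
    simp [derivative_sub, derivative_C_mul]
  refine ⟨hP0, hm1, ?_, ?_⟩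
  · intro hmL
    rcases hnb with hf | hg
    · exact (wmr_aux P (derivative f * g - f * derivative g) f x hP0 hf
        (by rw [hdPe, hPdef]; ring)).1 hmL
    · exact (wmr_aux P (derivative f * g - f * derivative g) g x hP0 hg
        (by rw [hdPe, hPdef]; ring)).1 hmL
  · intro hmL
    rcases hnb with hf | hg
    · exact (wmr_aux P (derivative f * g - f * derivative g) f x hP0 hf
        (by rw [hdPe, hPdef]; ring)).2 hmL
    · exact (wmr_aux P (derivative f * g - f * derivative g) g x hP0 hg
        (by rw [hdPe, hPdef]; ring)).2 hmL
end

section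
/- (One critical point forces wild ramification.) Let L be an algebraically closed field, let d ≥ 2 be an integer, and let f, g ∈ L[X] be coprime polynomials with natDegree f = d and natDegree g = d − 1 (so φ = f/g is a separable rational function of degree d ≥ 2 for which ∞ is a non-critical fixed point). Let W = f'·g − f·g'. If W has exactly one distinct root c ∈ L (i.e., all critical points of φ coincide), then: char L = p > 0; p divides m = rootMultiplicity c (C(g.eval c)·f − C(f.eval c)·g); and rootMultiplicity c W = 2d − 2 (the single critical point has weight 2·deg(φ) − 2). -/
/-!
Write `W = f'g - fg'` and `h = g(c)·f - f(c)·g`, so that `m = ord_c h`. Since `deg f = deg g + 1`,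
`W` has exact degree `2d - 2` (leading coefficient `lc f · lc g`), and as `L` is algebraically
closed and `c` is the only root of `W`, `ord_c W = 2d - 2`.
On the other hand `g(c)·W = h'g - hg'` and `f(c)·W = h'f - hf'`, and one of `f(c), g(c)` is
nonzero by coprimality. Writing `h = (X - c)^m q`, one gets `ord_c (h'k - hk') = m - 1` whenever
`k(c) ≠ 0` and `m ≠ 0` in `L`. In that tame case `2d - 2 = m - 1 ≤ deg h - 1 ≤ d - 1`, impossible
for `d ≥ 2`. So `m = 0` in `L` with `m ≥ 1`, i.e. the characteristic is positive and divides `m`.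
-/

open Polynomial

namespace Polynomial

section CommRing

variable {R : Type*} [CommRing R]

theorem coeff_derivative_mul_sub_mul_derivative_of_natDegree_eq_succ {f g : R[X]} {n : ℕ}
    (hf : f.natDegree = n + 1) (hg : g.natDegree = n) :
    (derivative f * g - f * derivative g).coeff (2 * n) = f.leadingCoeff * g.leadingCoeff := by
  have hfg : (derivative f * g).coeff (n + n) = (n + 1) * f.leadingCoeff * g.leadingCoeff := by
    rw [coeff_mul_add_eq_of_natDegree_le (natDegree_derivative_le f |>.trans (by omega)) hg.le,
      coeff_derivative, leadingCoeff, leadingCoeff, hf, hg]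
    ring
  rcases n with _ | n
  · simpa [derivative_of_natDegree_zero hg] using hfg
  · have hgf :
        (f * derivative g).coeff (n + 2 + n) = (n + 1) * f.leadingCoeff * g.leadingCoeff := by
      rw [coeff_mul_add_eq_of_natDegree_le hf.le (natDegree_derivative_le g |>.trans (by omega)),
        coeff_derivative, leadingCoeff, leadingCoeff, hf, hg]
      ring
    rw [coeff_sub, two_mul, hfg, show n + 1 + (n + 1) = n + 2 + n by omega, hgf]
    push_cast
    ring

theorem natDegree_derivative_mul_sub_mul_derivative_of_natDegree_eq_succ [IsDomain R]
    {f g : R[X]} {n : ℕ} (hf : f.natDegree = n + 1) (hg : g.natDegree = n) :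
    (derivative f * g - f * derivative g).natDegree = 2 * n := by
  rcases eq_or_ne g 0 with rfl | hg0
  · simp [← hg]
  have hf0 : f ≠ 0 := by rintro rfl; simp at hf
  refine natDegree_eq_of_le_of_coeff_ne_zero ((natDegree_sub_le _ _).trans (max_le ?_ ?_)) ?_
  · exact natDegree_mul_le.trans (by have := natDegree_derivative_le f; omega)
  · rcases n with _ | n
    · simp [derivative_of_natDegree_zero hg]
    · exact natDegree_mul_le.trans (by have := natDegree_derivative_le g; omega)
  · rw [coeff_derivative_mul_sub_mul_derivative_of_natDegree_eq_succ hf hg]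
    exact mul_ne_zero (leadingCoeff_ne_zero.2 hf0) (leadingCoeff_ne_zero.2 hg0)

theorem rootMultiplicity_derivative_mul_sub_mul_derivative [IsDomain R] {h k : R[X]} {c : R}
    (hh : h ≠ 0) (hk : ¬k.IsRoot c) (hm : (h.rootMultiplicity c : R) ≠ 0) :
    (derivative h * k - h * derivative k).rootMultiplicity c = h.rootMultiplicity c - 1 := by
  obtain ⟨q, hq, hqc⟩ := h.exists_eq_pow_rootMultiplicity_mul_and_not_dvd hh c
  rw [dvd_iff_isRoot] at hqc
  obtain ⟨j, hj⟩ : ∃ j, h.rootMultiplicity c = j + 1 :=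
    Nat.exists_eq_succ_of_ne_zero (by rintro h0; simp [h0] at hm)
  rw [hj] at hq hm
  set B := C ((j + 1 : ℕ) : R) * q * k + (X - C c) * (derivative q * k - q * derivative k)
  have hB : ¬B.IsRoot c := by
    simp only [B, IsRoot, eval_add, eval_mul, eval_C, eval_sub, eval_X, sub_self, zero_mul,
      add_zero]
    exact mul_ne_zero (mul_ne_zero hm hqc) hk
  have hW : derivative h * k - h * derivative k = B * (X - C c) ^ j := by
    rw [hq, derivative_mul, derivative_X_sub_C_pow]
    simp only [B, pow_succ, Nat.add_sub_cancel]
    ring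
  rw [hW, rootMultiplicity_mul_X_sub_C_pow (fun h0 ↦ hB (by simp [h0])),
    rootMultiplicity_eq_zero hB, hj]
  simp

theorem rootMultiplicity_C_mul [IsDomain R] {a : R} (ha : a ≠ 0) (p : R[X]) (c : R) :
    (C a * p).rootMultiplicity c = p.rootMultiplicity c := by
  rcases eq_or_ne p 0 with rfl | hp
  · simp
  rw [rootMultiplicity_mul (mul_ne_zero (C_ne_zero.2 ha) hp), rootMultiplicity_C, zero_add]

theorem _root_.IsCoprime.eval_ne_zero_or [Nontrivial R] {f g : R[X]} (hfg : IsCoprime f g)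
    (c : R) : f.eval c ≠ 0 ∨ g.eval c ≠ 0 := by
  by_contra! h
  have := hfg.map (evalRingHom c)
  simp only [coe_evalRingHom, h.1, h.2] at this
  exact not_isCoprime_zero_zero this

theorem _root_.IsCoprime.rootMultiplicity_derivative_mul_sub_mul_derivative [IsDomain R]
    {f g : R[X]} (hfg : IsCoprime f g) {c : R} (hh : C (g.eval c) * f - C (f.eval c) * g ≠ 0)
    (hm : ((C (g.eval c) * f - C (f.eval c) * g).rootMultiplicity c : R) ≠ 0) :
    (derivative f * g - f * derivative g).rootMultiplicity c =
      (C (g.eval c) * f - C (f.eval c) * g).rootMultiplicity c - 1 := by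
  set h := C (g.eval c) * f - C (f.eval c) * g
  rcases hfg.eval_ne_zero_or c with hk | hk <;>
  · rw [← rootMultiplicity_C_mul hk,
      ← Polynomial.rootMultiplicity_derivative_mul_sub_mul_derivative hh hk hm]
    congr 1
    simp only [h, derivative_sub, derivative_mul, derivative_C]
    ring

theorem _root_.IsCoprime.C_eval_mul_sub_C_eval_mul_ne_zero [IsDomain R] {f g : R[X]}
    (hfg : IsCoprime f g) (hdeg : g.natDegree < f.natDegree) (c : R) :
    C (g.eval c) * f - C (f.eval c) * g ≠ 0 := by
  rcases eq_or_ne (g.eval c) 0 with hu | hu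
  · have hv := (hfg.eval_ne_zero_or c).resolve_right (not_not.2 hu)
    have hg : g ≠ 0 := by
      rintro rfl
      have := natDegree_eq_zero_of_isUnit (isCoprime_zero_right.1 hfg)
      omega
    simpa [hu] using mul_ne_zero (C_ne_zero.2 hv) hg
  · refine ne_zero_of_natDegree_gt (n := 0) ?_
    rw [natDegree_sub_eq_left_of_natDegree_lt] <;> rw [natDegree_C_mul hu]
    · omega
    · exact natDegree_C_mul_le _ _ |>.trans_lt hdeg

end CommRing

theorem rootMultiplicity_eq_natDegree_of_forall_isRoot {K : Type*} [Field K] [IsAlgClosed K]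
    {p : K[X]} {c : K} (h : ∀ y, p.IsRoot y → y = c) : p.rootMultiplicity c = p.natDegree := by
  classical
  rw [← count_roots, Multiset.count_eq_card.2 fun y hy ↦ (h y (isRoot_of_mem_roots hy)).symm,
    IsAlgClosed.card_roots_eq_natDegree]

end Polynomial

/-- One critical point forces wild ramification: over an algebraically closed field, if
`f, g` are coprime with `deg f = d ≥ 2`, `deg g = d − 1` (so `φ = f/g` is separable of degree
`d ≥ 2` with `∞` a non-critical fixed point), and the Wronskian `W = f'·g − f·g'` has exactly
one distinct root `c`, then the characteristic of `L` is positive, it divides the multiplicity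
`m_φ(c)`, and `c` has weight `2d − 2`. -/
theorem one_critical_point_wild {L : Type*} [Field L] [IsAlgClosed L] (d : ℕ) (hd : 2 ≤ d)
    (f g : L[X]) (hfg : IsCoprime f g) (hf : f.natDegree = d) (hg : g.natDegree = d - 1)
    (c : L) (hc : ∀ y : L, (derivative f * g - f * derivative g).IsRoot y ↔ y = c) :
    ringChar L ≠ 0 ∧
    ringChar L ∣ rootMultiplicity c (C (g.eval c) * f - C (f.eval c) * g) ∧
    rootMultiplicity c (derivative f * g - f * derivative g) = 2 * d - 2 := by
  obtain ⟨n, rfl⟩ : ∃ n, d = n + 1 := ⟨d - 1, by omega⟩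
  set h := C (g.eval c) * f - C (f.eval c) * g
  have hW : (derivative f * g - f * derivative g).rootMultiplicity c = 2 * n := by
    rw [rootMultiplicity_eq_natDegree_of_forall_isRoot fun y ↦ (hc y).1,
      natDegree_derivative_mul_sub_mul_derivative_of_natDegree_eq_succ hf (by omega)]
  have hh : h ≠ 0 := hfg.C_eval_mul_sub_C_eval_mul_ne_zero (by omega) c
  have hm_pos : 0 < h.rootMultiplicity c :=
    (rootMultiplicity_pos hh).2 (by simp only [h, IsRoot, eval_sub, eval_mul, eval_C]; ring)
  have hm_le : h.rootMultiplicity c ≤ n + 1 := by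
    classical
    calc h.rootMultiplicity c ≤ h.natDegree := by
          rw [← count_roots]; exact (Multiset.count_le_card _ _).trans (card_roots' h)
      _ ≤ n + 1 := (natDegree_sub_le _ _).trans <| max_le
          ((natDegree_C_mul_le _ _).trans hf.le) ((natDegree_C_mul_le _ _).trans (by omega))
  have hwild : (h.rootMultiplicity c : L) = 0 := by
    by_contra htame
    have : (derivative f * g - f * derivative g).rootMultiplicity c = h.rootMultiplicity c - 1 :=
      hfg.rootMultiplicity_derivative_mul_sub_mul_derivative hh htame
    omega
  have hdvd : ringChar L ∣ h.rootMultiplicity c := (ringChar.spec L _).1 hwild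
  refine ⟨fun hp ↦ ?_, hdvd, by omega⟩
  rw [hp, zero_dvd_iff] at hdvd
  omega
end

section
/- (Tame directional multiplicity forces a critical point in the disk.) Let k be an algebraically closed field that is complete with respect to a nontrivial non-Archimedean absolute value |·|. Let m ≥ 1 and s ≥ 0 be integers with m + s ≥ 2, and let f, g ∈ k[X] be polynomials all of whose coefficients have absolute value ≤ 1, satisfying: |f.coeff i| < 1 for all i < m + s and |f.coeff (m+s)| = 1; |g.coeff j| < 1 for all j < s and |g.coeff s| = 1. If the image of m in k has absolute value 1 (i.e., the residue characteristic does not divide m), then the Wronskian f'·g − f·g' has a root x ∈ k with |x| < 1. -/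
/-!
If the Wronskian `W = f'g - fg'` had no zero in the open unit disk, then, since `k` is
algebraically closed, `W` would be a constant times a product of factors `X - r` with `|r| ≥ 1`,
and for such a product the constant coefficient has the largest absolute value. But modulo the
maximal ideal only the terms `(i - j) f_i g_j` with `i ≥ m + s` and `j ≥ s` of `W` survive: the
constant coefficient reduces to `0`, while the coefficient of `X^(m + 2s - 1)` reduces to
`m f_{m+s} g_s`, a unit because `m` is prime to the residue characteristic.
-/

open Polynomial Finset

section Ultrametric

variable {k : Type*} [NormedField k] [IsUltrametricDist k]

lemma norm_sub_le_max_of_ultrametric (a b : k) : ‖a - b‖ ≤ max ‖a‖ ‖b‖ := by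
  simpa [sub_eq_add_neg] using IsUltrametricDist.norm_add_le_max a (-b)

lemma norm_sum_lt_of_forall_lt {ι : Type*} {s : Finset ι} {F : ι → k} {C : ℝ} (hC : 0 < C)
    (h : ∀ i ∈ s, ‖F i‖ < C) : ‖∑ i ∈ s, F i‖ < C := by
  rcases s.eq_empty_or_nonempty with rfl | hs
  · simpa using hC
  obtain ⟨i, hi, hle⟩ := IsUltrametricDist.exists_norm_finsetSum_le_of_nonempty hs F
  exact hle.trans_lt (h i hi)

lemma norm_coeff_X_sub_C_mul_le {Q : k[X]} (hQ : ∀ n, ‖Q.coeff n‖ ≤ ‖Q.coeff 0‖) {r : k}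
    (hr : 1 ≤ ‖r‖) (n : ℕ) : ‖((X - C r) * Q).coeff n‖ ≤ ‖((X - C r) * Q).coeff 0‖ := by
  have hcoeff_zero : ‖((X - C r) * Q).coeff 0‖ = ‖r‖ * ‖Q.coeff 0‖ := by
    simp [mul_coeff_zero, norm_mul]
  rw [hcoeff_zero]
  cases n with
  | zero => exact hcoeff_zero.le
  | succ n =>
    have hcoeff_succ : ((X - C r) * Q).coeff (n + 1) = Q.coeff n - r * Q.coeff (n + 1) := by
      simp [sub_mul, X_mul, coeff_C_mul]
    rw [hcoeff_succ]
    refine (norm_sub_le_max_of_ultrametric _ _).trans (max_le ?_ ?_)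
    · exact (hQ n).trans (le_mul_of_one_le_left (norm_nonneg _) hr)
    · rw [norm_mul]
      exact mul_le_mul_of_nonneg_left (hQ (n + 1)) (norm_nonneg _)

lemma norm_coeff_prod_X_sub_C_le {s : Multiset k} (hs : ∀ r ∈ s, 1 ≤ ‖r‖) (n : ℕ) :
    ‖(s.map (X - C ·)).prod.coeff n‖ ≤ ‖(s.map (X - C ·)).prod.coeff 0‖ := by
  induction s using Multiset.induction_on generalizing n with
  | empty =>
    simp only [Multiset.map_zero, Multiset.prod_zero, coeff_one]
    split_ifs <;> simp
  | cons r s ih =>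
    simp only [Multiset.map_cons, Multiset.prod_cons]
    exact norm_coeff_X_sub_C_mul_le (ih fun r' hr' => hs r' (Multiset.mem_cons_of_mem hr'))
      (hs r (Multiset.mem_cons_self r s)) n

lemma norm_coeff_le_norm_coeff_zero_of_roots [IsAlgClosed k] {P : k[X]}
    (hP : ∀ z, P.IsRoot z → 1 ≤ ‖z‖) (n : ℕ) : ‖P.coeff n‖ ≤ ‖P.coeff 0‖ := by
  rw [← C_leadingCoeff_mul_prod_multiset_X_sub_C (p := P) IsAlgClosed.card_roots_eq_natDegree]
  simp only [coeff_C_mul, norm_mul]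
  exact mul_le_mul_of_nonneg_left
    (norm_coeff_prod_X_sub_C_le (fun r hr => hP r (isRoot_of_mem_roots hr)) n) (norm_nonneg _)

end Ultrametric

lemma coeff_wronskian {R : Type*} [CommRing R] (f g : R[X]) (n : ℕ) :
    (wronskian f g).coeff n =
      ∑ p ∈ antidiagonal (n + 1), ((p.2 : R) - p.1) * (f.coeff p.1 * g.coeff p.2) := by
  have hderiv_right : (f * derivative g).coeff n =
      ∑ p ∈ antidiagonal (n + 1), (p.2 : R) * (f.coeff p.1 * g.coeff p.2) := by
    rw [Nat.sum_antidiagonal_succ', coeff_mul]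
    simp only [Nat.cast_zero, zero_mul, zero_add, coeff_derivative]
    exact sum_congr rfl fun p _ => by push_cast; ring
  have hderiv_left : (derivative f * g).coeff n =
      ∑ p ∈ antidiagonal (n + 1), (p.1 : R) * (f.coeff p.1 * g.coeff p.2) := by
    rw [Nat.sum_antidiagonal_succ, coeff_mul]
    simp only [Nat.cast_zero, zero_mul, zero_add, coeff_derivative]
    exact sum_congr rfl fun p _ => by push_cast; ring
  rw [wronskian, coeff_sub, hderiv_right, hderiv_left, ← sum_sub_distrib]
  exact sum_congr rfl fun p _ => by ring

section IntegralWronskian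

variable {k : Type*} [NormedField k] [IsUltrametricDist k] {f g : k[X]}

lemma norm_wronskian_term_lt_one (hf : ∀ i, ‖f.coeff i‖ ≤ 1) (hg : ∀ j, ‖g.coeff j‖ ≤ 1)
    {i j : ℕ} (h : ‖f.coeff i‖ < 1 ∨ ‖g.coeff j‖ < 1) :
    ‖((j : k) - i) * (f.coeff i * g.coeff j)‖ < 1 := by
  have hcast : ‖(j : k) - i‖ ≤ 1 := by
    simpa using IsUltrametricDist.norm_intCast_le_one k ((j : ℤ) - i)
  rw [norm_mul, norm_mul]
  refine mul_lt_one_of_nonneg_of_lt_one_right hcast (by positivity) ?_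
  rcases h with hfi | hgj
  · exact mul_lt_one_of_nonneg_of_lt_one_left (norm_nonneg _) hfi (hg j)
  · exact mul_lt_one_of_nonneg_of_lt_one_right (hf i) (norm_nonneg _) hgj

lemma norm_coeff_wronskian_lt_one (hf : ∀ i, ‖f.coeff i‖ ≤ 1) (hg : ∀ j, ‖g.coeff j‖ ≤ 1)
    {n : ℕ} (h : ∀ i j, i + j = n + 1 → ‖f.coeff i‖ < 1 ∨ ‖g.coeff j‖ < 1) :
    ‖(wronskian f g).coeff n‖ < 1 := by
  rw [coeff_wronskian]
  exact norm_sum_lt_of_forall_lt one_pos fun p hp =>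
    norm_wronskian_term_lt_one hf hg (h p.1 p.2 (HasAntidiagonal.mem_antidiagonal.mp hp))

lemma norm_coeff_wronskian_eq_one (hf : ∀ i, ‖f.coeff i‖ ≤ 1) (hg : ∀ j, ‖g.coeff j‖ ≤ 1)
    {a b n : ℕ} (hfa : ‖f.coeff a‖ = 1) (hgb : ‖g.coeff b‖ = 1)
    (hf_lt : ∀ i < a, ‖f.coeff i‖ < 1) (hg_lt : ∀ j < b, ‖g.coeff j‖ < 1)
    (hab : ‖(b : k) - a‖ = 1) (hn : n + 1 = a + b) :
    ‖(wronskian f g).coeff n‖ = 1 := by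
  have hmem : (a, b) ∈ antidiagonal (n + 1) := HasAntidiagonal.mem_antidiagonal.mpr hn.symm
  have hlead : ‖((b : k) - a) * (f.coeff a * g.coeff b)‖ = 1 := by
    rw [norm_mul, norm_mul, hab, hfa, hgb, one_mul, one_mul]
  have hrest : ‖∑ p ∈ (antidiagonal (n + 1)).erase (a, b),
      ((p.2 : k) - p.1) * (f.coeff p.1 * g.coeff p.2)‖ < 1 := by
    refine norm_sum_lt_of_forall_lt one_pos fun p hp => norm_wronskian_term_lt_one hf hg ?_
    obtain ⟨hne, hp⟩ := mem_erase.mp hp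
    rw [HasAntidiagonal.mem_antidiagonal] at hp
    rcases lt_or_ge p.1 a with h | h
    · exact .inl (hf_lt p.1 h)
    · exact .inr (hg_lt p.2 (by grind))
  rw [coeff_wronskian, ← add_sum_erase _ _ hmem,
    IsUltrametricDist.norm_add_eq_max_of_norm_ne_norm (hlead ▸ hrest.ne'), hlead,
    max_eq_left hrest.le]

end IntegralWronskian

theorem tame_direction_gives_critical_point_general {k : Type*} [NontriviallyNormedField k]
    [IsAlgClosed k] [IsUltrametricDist k]
    (m s : ℕ) (hms : 2 ≤ m + s) (f g : k[X])
    (hf1 : ∀ i, ‖f.coeff i‖ ≤ 1) (hg1 : ∀ j, ‖g.coeff j‖ ≤ 1)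
    (hfsmall : ∀ i < m + s, ‖f.coeff i‖ < 1) (hftop : ‖f.coeff (m + s)‖ = 1)
    (hgsmall : ∀ j < s, ‖g.coeff j‖ < 1) (hgtop : ‖g.coeff s‖ = 1)
    (hmk : ‖(m : k)‖ = 1) :
    ∃ x : k, ‖x‖ < 1 ∧ (derivative f * g - f * derivative g).IsRoot x := by
  rw [show derivative f * g - f * derivative g = wronskian g f by rw [wronskian]; ring]
  by_contra! hno_root
  have hroots : ∀ z, (wronskian g f).IsRoot z → 1 ≤ ‖z‖ :=
    fun z hz => not_lt.mp fun hz1 => hno_root z hz1 hz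
  have hcoeff_zero : ‖(wronskian g f).coeff 0‖ < 1 :=
    norm_coeff_wronskian_lt_one hg1 hf1 fun _ j hij => .inr (hfsmall j (by omega))
  have hcoeff_top : ‖(wronskian g f).coeff (m + s + s - 1)‖ = 1 :=
    norm_coeff_wronskian_eq_one hg1 hf1 hgtop hftop hgsmall hfsmall
      (by push_cast; simpa using hmk) (by omega)
  have := norm_coeff_le_norm_coeff_zero_of_roots hroots (m + s + s - 1)
  linarith

/-- Tame directional multiplicity forces a critical point in the disk.  Let `k` be an
algebraically closed field complete with respect to a nontrivial non-Archimedean absolute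
value.  Let `m ≥ 1`, `s ≥ 0` with `m + s ≥ 2`, and let `f, g` be polynomials with all
coefficients of absolute value `≤ 1` such that `|f.coeff i| < 1` for `i < m + s`,
`|f.coeff (m+s)| = 1`, `|g.coeff j| < 1` for `j < s`, and `|g.coeff s| = 1`.  If the image of
`m` in `k` has absolute value `1` (the residue characteristic does not divide `m`), then the
Wronskian `f'·g − f·g'` has a root `x` with `|x| < 1`. -/
theorem tame_direction_gives_critical_point {k : Type*} [NontriviallyNormedField k]
    [IsAlgClosed k] [CompleteSpace k] [IsUltrametricDist k]
    (m s : ℕ) (hm : 1 ≤ m) (hms : 2 ≤ m + s) (f g : k[X])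
    (hf1 : ∀ i, ‖f.coeff i‖ ≤ 1) (hg1 : ∀ j, ‖g.coeff j‖ ≤ 1)
    (hfsmall : ∀ i < m + s, ‖f.coeff i‖ < 1) (hftop : ‖f.coeff (m + s)‖ = 1)
    (hgsmall : ∀ j < s, ‖g.coeff j‖ < 1) (hgtop : ‖g.coeff s‖ = 1)
    (hmk : ‖(m : k)‖ = 1) :
    ∃ x : k, ‖x‖ < 1 ∧ (derivative f * g - f * derivative g).IsRoot x :=
  tame_direction_gives_critical_point_general m s hms f g hf1 hg1 hfsmall hftop hgsmall hgtop hmk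
end

section
/- (Classical form of the surplus-multiplicity lower bound.) Let k be an algebraically closed field that is complete with respect to a nontrivial non-Archimedean absolute value, with ring of integers 𝒪 = {x ∈ k : |x| ≤ 1}, residue field k̃, and coefficientwise reduction map π : 𝒪[X] → k̃[X]. Let f, g ∈ 𝒪[X] be polynomials that are coprime in k[X] and whose reductions π(f), π(g) are linearly independent over k̃, and let H be a greatest common divisor of π(f) and π(g) in k̃[X]. Then for every y ∈ k and every a ∈ 𝒪, the polynomial f − y·g is nonzero and the number of its roots x with |x − a| < 1, counted with multiplicity, is at least the root multiplicity of the residue of a as a root of H. -/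
/-!
Write `f - y g = c (u f + v g)` with `c ≠ 0` and `u, v ∈ 𝒪` one of which is `1`. Then
`h = u f + v g` has reduction `ũ π f + ṽ π g`, which is nonzero by independence and divisible by
`H`, so it suffices to show that an `h ∈ 𝒪[X]` with `π h ≠ 0` has at least `mult_ã (π h)` roots in
the disk `|x - a| < 1`. Roots lift: if `h` (shifted to `a = 0`) had no root in the open unit disk,
then, `h` splitting over `k`, every coefficient would be bounded by the constant one, which has
norm `< 1`, forcing `π h = 0`. Dividing out a lifted root lowers the multiplicity by one.
-/

open Polynomial

variable (k : Type*) [NontriviallyNormedField k] [IsUltrametricDist k]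

/-- The ring of integers `𝒪 = {x ∈ k : ‖x‖ ≤ 1}` of a non-Archimedean normed field. -/
def ringOfIntegers : Subring k where
  carrier := {x : k | ‖x‖ ≤ 1}
  mul_mem' := fun {a b} ha hb => by
    simp only [Set.mem_setOf_eq] at *
    calc ‖a * b‖ = ‖a‖ * ‖b‖ := norm_mul a b
    _ ≤ 1 := mul_le_one₀ ha (norm_nonneg b) hb
  one_mem' := by simp
  add_mem' := fun {a b} ha hb => by
    simp only [Set.mem_setOf_eq] at *
    exact le_trans (IsUltrametricDist.norm_add_le_max a b) (max_le ha hb)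
  zero_mem' := by simp
  neg_mem' := fun {a} ha => by simpa using ha

/-- The maximal ideal `{x ∈ 𝒪 : ‖x‖ < 1}` of the ring of integers. -/
def maxIdeal : Ideal (ringOfIntegers k) where
  carrier := {x | ‖(x : k)‖ < 1}
  add_mem' := fun {a b} ha hb => by
    simp only [Set.mem_setOf_eq] at *
    exact lt_of_le_of_lt (IsUltrametricDist.norm_add_le_max (a : k) (b : k)) (max_lt ha hb)
  zero_mem' := by simp
  smul_mem' := fun c x hx => by
    simp only [Set.mem_setOf_eq] at *
    calc ‖((c • x : ringOfIntegers k) : k)‖ = ‖(c : k)‖ * ‖(x : k)‖ := norm_mul _ _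
    _ ≤ 1 * ‖(x : k)‖ := by gcongr; exact c.2
    _ < 1 := by simpa using hx

/-- The residue field `k̃ = 𝒪 / {‖x‖ < 1}`. -/
abbrev residueField := (ringOfIntegers k) ⧸ (maxIdeal k)

/-- Coefficientwise reduction map `π : 𝒪[X] → k̃[X]`. -/
noncomputable def redPoly (h : Polynomial (ringOfIntegers k)) : Polynomial (residueField k) :=
  h.map (Ideal.Quotient.mk (maxIdeal k))

/-- Inclusion `𝒪[X] → k[X]`. -/
noncomputable def toPoly (h : Polynomial (ringOfIntegers k)) : Polynomial k :=
  h.map (ringOfIntegers k).subtype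

section Ultrametric

variable {K : Type*} [NormedField K] [IsUltrametricDist K]

theorem norm_coeff_mul_X_sub_C_le {q : K[X]} (hq : ∀ n, ‖q.coeff n‖ ≤ ‖q.coeff 0‖) {r : K}
    (hr : 1 ≤ ‖r‖) (n : ℕ) : ‖(q * (X - C r)).coeff n‖ ≤ ‖(q * (X - C r)).coeff 0‖ := by
  have h0 : ‖(q * (X - C r)).coeff 0‖ = ‖q.coeff 0‖ * ‖r‖ := by simp [mul_coeff_zero]
  rw [h0]
  cases n with
  | zero => exact h0.le
  | succ n =>
    rw [coeff_mul_X_sub_C, sub_eq_add_neg]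
    refine (IsUltrametricDist.norm_add_le_max _ _).trans (max_le ?_ ?_)
    · exact (hq n).trans (le_mul_of_one_le_right (norm_nonneg _) hr)
    · rw [norm_neg, norm_mul]
      exact mul_le_mul_of_nonneg_right (hq (n + 1)) (norm_nonneg _)

theorem norm_coeff_le_norm_coeff_zero_of_splits {p : K[X]} (hp : p.Splits)
    (hroots : ∀ z ∈ p.roots, 1 ≤ ‖z‖) (n : ℕ) : ‖p.coeff n‖ ≤ ‖p.coeff 0‖ := by
  suffices key : ∀ s : Multiset K, (∀ z ∈ s, 1 ≤ ‖z‖) →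
      ∀ n, ‖((s.map (X - C ·)).prod).coeff n‖ ≤ ‖((s.map (X - C ·)).prod).coeff 0‖ by
    rw [hp.eq_prod_roots, coeff_C_mul, coeff_C_mul, norm_mul, norm_mul]
    exact mul_le_mul_of_nonneg_left (key _ hroots n) (norm_nonneg _)
  intro s
  induction s using Multiset.induction_on with
  | empty =>
    intro _ n
    rcases n with _ | n <;> simp [coeff_one]
  | cons r s ih =>
    intro hs
    rw [Multiset.map_cons, Multiset.prod_cons, mul_comm]
    exact norm_coeff_mul_X_sub_C_le (ih fun z hz ↦ hs z (Multiset.mem_cons_of_mem hz))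
      (hs r (Multiset.mem_cons_self r s))

end Ultrametric

section RingOfIntegers

variable {k}

theorem mem_ringOfIntegers {x : k} : x ∈ ringOfIntegers k ↔ ‖x‖ ≤ 1 :=
  Iff.rfl

theorem residue_eq_zero_iff (x : ringOfIntegers k) :
    Ideal.Quotient.mk (maxIdeal k) x = 0 ↔ ‖(x : k)‖ < 1 :=
  Ideal.Quotient.eq_zero_iff_mem

theorem residue_eq_residue_iff (x y : ringOfIntegers k) :
    Ideal.Quotient.mk (maxIdeal k) x = Ideal.Quotient.mk (maxIdeal k) y ↔ ‖(x : k) - y‖ < 1 := by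
  rw [← sub_eq_zero, ← map_sub, residue_eq_zero_iff, AddSubgroupClass.coe_sub]

instance : Nontrivial (residueField k) :=
  nontrivial_of_ne 1 0 fun h ↦ by simpa using (residue_eq_zero_iff (1 : ringOfIntegers k)).mp h

theorem toPoly_ne_zero {h : (ringOfIntegers k)[X]} (hh : redPoly k h ≠ 0) : toPoly k h ≠ 0 := by
  rintro h0
  refine hh ?_
  rw [toPoly, Polynomial.map_eq_zero_iff Subtype.coe_injective] at h0
  simp [redPoly, h0]

theorem exists_isRoot_norm_lt_one [IsAlgClosed k] {h : (ringOfIntegers k)[X]}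
    (hh : redPoly k h ≠ 0) (h0 : (redPoly k h).coeff 0 = 0) :
    ∃ x, (toPoly k h).IsRoot x ∧ ‖x‖ < 1 := by
  by_contra! hroots
  refine hh (Polynomial.ext fun n ↦ ?_)
  have hle : ‖(toPoly k h).coeff n‖ ≤ ‖(toPoly k h).coeff 0‖ :=
    norm_coeff_le_norm_coeff_zero_of_splits (IsAlgClosed.splits _)
      (fun z hz ↦ hroots z (isRoot_of_mem_roots hz)) n
  rw [coeff_zero]
  rw [redPoly, coeff_map, residue_eq_zero_iff] at h0 ⊢
  simpa [toPoly] using hle.trans_lt (by simpa [toPoly] using h0)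

theorem exists_isRoot_norm_sub_lt_one [IsAlgClosed k] {h : (ringOfIntegers k)[X]}
    (hh : redPoly k h ≠ 0) {a : ringOfIntegers k}
    (ha : (redPoly k h).IsRoot (Ideal.Quotient.mk (maxIdeal k) a)) :
    ∃ x, (toPoly k h).IsRoot x ∧ ‖x - a‖ < 1 := by
  have hred : redPoly k (taylor a h) = taylor (Ideal.Quotient.mk (maxIdeal k) a) (redPoly k h) :=
    map_taylor _ _ _
  obtain ⟨x, hx, hx1⟩ := exists_isRoot_norm_lt_one (h := taylor a h)
    (by rwa [hred, Ne, taylor_eq_zero]) (by rwa [hred, taylor_coeff_zero])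
  refine ⟨x + a, ?_, by simpa using hx1⟩
  simpa [IsRoot, toPoly, taylor_eval] using hx

theorem rootMultiplicity_redPoly_le_card_roots [IsAlgClosed k] {h : (ringOfIntegers k)[X]}
    (hh : redPoly k h ≠ 0) (a : ringOfIntegers k) :
    rootMultiplicity (Ideal.Quotient.mk (maxIdeal k) a) (redPoly k h) ≤
      Multiset.card ((toPoly k h).roots.filter (fun x ↦ ‖x - (a : k)‖ < 1)) := by
  induction hm : rootMultiplicity (Ideal.Quotient.mk (maxIdeal k) a) (redPoly k h)
    generalizing h with
  | zero => exact Nat.zero_le _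
  | succ n ih =>
    obtain ⟨x, hx, hxa⟩ :=
      exists_isRoot_norm_sub_lt_one (a := a) hh ((rootMultiplicity_pos hh).mp (by omega))
    have hx1 : ‖x‖ ≤ 1 := by
      simpa using (IsUltrametricDist.norm_add_le_max (x - a) a).trans (max_le hxa.le a.2)
    lift x to ringOfIntegers k using hx1
    set q := h /ₘ (X - C x)
    have hfac : (X - C x) * q = h := mul_divByMonic_eq_iff_isRoot.mpr <|
      (isRoot_map_iff Subtype.coe_injective).mp hx
    have hred : redPoly k h = redPoly k q * (X - C (Ideal.Quotient.mk (maxIdeal k) a)) ^ 1 := by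
      rw [← hfac, redPoly, redPoly, Polynomial.map_mul, Polynomial.map_sub, map_X, map_C,
        (residue_eq_residue_iff x a).mpr hxa, pow_one]
      exact mul_comm (G := (residueField k)[X]) _ _
    have hq : redPoly k q ≠ 0 := left_ne_zero_of_mul (hred ▸ hh)
    have hmq : rootMultiplicity (Ideal.Quotient.mk (maxIdeal k) a) (redPoly k q) = n := by
      rw [hred, rootMultiplicity_mul_X_sub_C_pow hq] at hm
      omega
    have hto : toPoly k h = (X - C (x : k)) * toPoly k q := by
      rw [← hfac, toPoly, toPoly, Polynomial.map_mul, Polynomial.map_sub, map_X, map_C]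
      rfl
    rw [hto, roots_mul (hto ▸ toPoly_ne_zero hh), roots_X_sub_C, Multiset.singleton_add,
      Multiset.filter_cons, if_pos hxa, Multiset.singleton_add, Multiset.card_cons]
    exact Nat.succ_le_succ (ih hq hmq)

theorem exists_integral_multiple_eq_one_neg (y : k) :
    ∃ (c : k) (u v : ringOfIntegers k), (u = 1 ∨ v = 1) ∧ c * u = 1 ∧ c * v = -y := by
  by_cases hy : ‖y‖ ≤ 1
  · exact ⟨1, 1, ⟨-y, mem_ringOfIntegers.mpr (by simpa using hy)⟩, Or.inl rfl, by simp, by simp⟩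
  · have hy0 : y ≠ 0 := by rintro rfl; simp at hy
    refine ⟨-y, ⟨-y⁻¹, ?_⟩, 1, Or.inr rfl, by simp [hy0], by simp⟩
    simpa [mem_ringOfIntegers] using inv_le_one_of_one_le₀ (le_of_not_ge hy)

end RingOfIntegers

theorem surplus_multiplicity_lower_bound [IsAlgClosed k]
    (f g : Polynomial (ringOfIntegers k))
    (hindep : ∀ a b : residueField k,
      C a * redPoly k f + C b * redPoly k g = 0 → a = 0 ∧ b = 0)
    (H : Polynomial (residueField k))
    (hHf : H ∣ redPoly k f) (hHg : H ∣ redPoly k g)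
    (y : k) (a : ringOfIntegers k) :
    toPoly k f - C y * toPoly k g ≠ 0 ∧
    rootMultiplicity (Ideal.Quotient.mk (maxIdeal k) a) H ≤
      Multiset.card ((toPoly k f - C y * toPoly k g).roots.filter
        (fun x => ‖x - (a : k)‖ < 1)) := by
  obtain ⟨c, u, v, huv, hcu, hcv⟩ := exists_integral_multiple_eq_one_neg y
  set h := C u * f + C v * g
  have hc : c ≠ 0 := left_ne_zero_of_mul_eq_one hcu
  have hto : toPoly k f - C y * toPoly k g = C c * toPoly k h := by
    simp only [h, toPoly, Polynomial.map_add, Polynomial.map_mul, map_C, Subring.coe_subtype]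
    rw [mul_add, ← mul_assoc, ← mul_assoc, ← C_mul, ← C_mul, hcu, hcv, C_1, C_neg]
    ring
  have hred : redPoly k h = C (Ideal.Quotient.mk (maxIdeal k) u) * redPoly k f
      + C (Ideal.Quotient.mk (maxIdeal k) v) * redPoly k g := by
    simp only [h, redPoly, Polynomial.map_add, Polynomial.map_mul, map_C]
  have hh : redPoly k h ≠ 0 := fun h0 ↦ by
    have := hindep _ _ (hred ▸ h0)
    rcases huv with rfl | rfl <;> simp_all
  have hH : H ∣ redPoly k h := by
    rw [hred]
    exact dvd_add (dvd_mul_of_dvd_right (α := (residueField k)[X]) hHf _)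
      (dvd_mul_of_dvd_right (α := (residueField k)[X]) hHg _)
  rw [hto, roots_C_mul _ hc]
  exact ⟨mul_ne_zero (C_ne_zero.mpr hc) (toPoly_ne_zero hh),
    (rootMultiplicity_le_rootMultiplicity_of_dvd hh hH _).trans
      (rootMultiplicity_redPoly_le_card_roots hh a)⟩
end

section
/- (Critical points in a disk of directional multiplicity one.) Let k be an algebraically closed field that is complete with respect to a nontrivial non-Archimedean absolute value, with ring of integers 𝒪 = {x ∈ k : |x| ≤ 1}, residue field k̃, and coefficientwise reduction map π : 𝒪[X] → k̃[X]. Let f, g ∈ 𝒪[X] be coprime in k[X], suppose π(f) and π(g) are nonzero, write π(f) = H·f₁ and π(g) = H·g₁ where H is a greatest common divisor of π(f) and π(g), and assume that f₁ has a simple zero at 0 (rootMultiplicity 0 f₁ = 1) and that g₁.eval 0 ≠ 0. Then the Wronskian W = f'·g − f·g' is nonzero, and the number of roots x of W with |x| < 1, counted with multiplicity, equals 2·(rootMultiplicity 0 H). That is, the total weight of the critical points of φ = f/g in the open unit disk equals twice the surplus multiplicity of that disk. -/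
open Polynomial

variable (k : Type*) [NontriviallyNormedField k] [IsUltrametricDist k]

/-!
Reduction commutes with derivation, so `π (wronskian g f) = H² · wronskian g₁ f₁`, and
`wronskian g₁ f₁ = g₁ f₁' - g₁' f₁` does not vanish at `0` because `0` is a simple root of `f₁`
while `g₁ 0 ≠ 0`. Hence `π (wronskian g f)` vanishes to order exactly `2 · ord₀ H` at `0`.

For any `Q ∈ 𝒪[X]` with `π Q ≠ 0`, the number of roots of `Q` in the open unit disk equals
`ord₀ (π Q)`: dividing out a root `r` with `|r| < 1` multiplies `π Q` by `X`, and once no such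
root is left, Vieta's formulas and the ultrametric inequality show that the constant coefficient
has the largest absolute value among the coefficients, namely `1`.
-/

section Ultrametric

variable {K : Type*} [NormedField K] [IsUltrametricDist K]

theorem Multiset.norm_esymm_le_norm_prod {s : Multiset K} (hs : ∀ x ∈ s, 1 ≤ ‖x‖) (m : ℕ) :
    ‖s.esymm m‖ ≤ ‖s.prod‖ := by
  obtain ⟨t, ht, hle⟩ :=
    IsUltrametricDist.exists_norm_multiset_sum_le (s.powersetCard m) (f := Multiset.prod)
  rcases eq_or_ne (s.powersetCard m) 0 with h0 | hne
  · simp [Multiset.esymm, h0]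
  obtain ⟨u, rfl⟩ := Multiset.le_iff_exists_add.1 (Multiset.mem_powersetCard.1 (ht hne)).1
  have hu : 1 ≤ ‖u.prod‖ := Multiset.prod_induction (fun x => 1 ≤ ‖x‖) u
    (fun a b ha hb => norm_mul a b ▸ one_le_mul_of_one_le_of_one_le ha hb) (by simp)
    (fun x hx => hs x (Multiset.mem_add.2 (Or.inr hx)))
  calc ‖(t + u).esymm m‖ ≤ ‖t.prod‖ := hle
    _ ≤ ‖t.prod‖ * ‖u.prod‖ := le_mul_of_one_le_right (norm_nonneg _) hu
    _ = ‖(t + u).prod‖ := by rw [Multiset.prod_add, norm_mul]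

theorem Polynomial.norm_coeff_le_norm_coeff_zero {P : K[X]} (hP : P.Splits)
    (hroots : ∀ r ∈ P.roots, 1 ≤ ‖r‖) (j : ℕ) : ‖P.coeff j‖ ≤ ‖P.coeff 0‖ := by
  rcases le_or_gt j P.natDegree with hj | hj
  · rw [coeff_eq_esymm_roots_of_splits hP hj, hP.coeff_zero_eq_leadingCoeff_mul_prod_roots]
    simp only [norm_mul, norm_pow, norm_neg, norm_one, one_pow, mul_one, one_mul]
    gcongr
    exact Multiset.norm_esymm_le_norm_prod hroots _
  · simp [coeff_eq_zero_of_natDegree_lt hj]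

end Ultrametric

section ReductionModMaxIdeal

variable {k}

theorem mem_maxIdeal_iff {x : ringOfIntegers k} : x ∈ maxIdeal k ↔ ‖(x : k)‖ < 1 := Iff.rfl

instance maxIdeal.isPrime : (maxIdeal k).IsPrime where
  ne_top' h := by simpa [mem_maxIdeal_iff] using (maxIdeal k).eq_top_iff_one.1 h
  mem_or_mem' {a b} hab := by
    by_contra! h
    simp only [mem_maxIdeal_iff, not_lt] at h
    have : ‖(a : k)‖ * ‖(b : k)‖ < 1 := by simpa [mem_maxIdeal_iff] using hab
    nlinarith [h.1, h.2]

theorem toPoly_injective : Function.Injective (toPoly k) :=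
  map_injective _ Subtype.val_injective

theorem toPoly_ne_zero_of_redPoly_ne_zero {Q : (ringOfIntegers k)[X]} (hQ : redPoly k Q ≠ 0) :
    toPoly k Q ≠ 0 := by
  intro h
  apply hQ
  rw [toPoly_injective (h.trans (Polynomial.map_zero _).symm), redPoly, Polynomial.map_zero]

theorem exists_norm_coeff_eq_one_of_redPoly_ne_zero {Q : (ringOfIntegers k)[X]}
    (hQ : redPoly k Q ≠ 0) :
    ∃ j, ‖(Q.coeff j : k)‖ = 1 := by
  by_contra! h
  refine hQ (Polynomial.ext fun j => ?_)
  rw [redPoly, coeff_map, coeff_zero, Ideal.Quotient.eq_zero_iff_mem, mem_maxIdeal_iff]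
  exact (Q.coeff j).2.lt_of_ne (h j)

theorem rootMultiplicity_redPoly_eq_zero_of_one_le_norm_roots [IsAlgClosed k]
    {Q : (ringOfIntegers k)[X]} (hQ : redPoly k Q ≠ 0)
    (hroots : ∀ r ∈ (toPoly k Q).roots, 1 ≤ ‖r‖) :
    rootMultiplicity 0 (redPoly k Q) = 0 := by
  refine rootMultiplicity_eq_zero fun hroot => ?_
  obtain ⟨j, hj⟩ := exists_norm_coeff_eq_one_of_redPoly_ne_zero hQ
  have hle := norm_coeff_le_norm_coeff_zero (IsAlgClosed.splits (toPoly k Q)) hroots j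
  rw [IsRoot, ← coeff_zero_eq_eval_zero, redPoly, coeff_map, Ideal.Quotient.eq_zero_iff_mem,
    mem_maxIdeal_iff] at hroot
  rw [toPoly, coeff_map, coeff_map] at hle
  exact (hj ▸ hle).not_gt hroot

theorem exists_toPoly_eq_X_sub_C_mul {Q : (ringOfIntegers k)[X]} {r : k} (hr : ‖r‖ < 1)
    (hroot : (toPoly k Q).IsRoot r) :
    ∃ S, toPoly k Q = (X - C r) * toPoly k S ∧ redPoly k Q = X * redPoly k S := by
  set r₀ : ringOfIntegers k := ⟨r, hr.le⟩
  have hr₀ : Q.IsRoot r₀ :=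
    Subtype.val_injective ((eval_map_apply (f := (ringOfIntegers k).subtype) r₀).symm.trans hroot)
  obtain ⟨S, rfl⟩ := dvd_iff_isRoot.2 hr₀
  have hred : Ideal.Quotient.mk (maxIdeal k) r₀ = 0 :=
    Ideal.Quotient.eq_zero_iff_mem.2 ((mem_maxIdeal_iff).2 hr)
  exact ⟨S, by simp [toPoly, r₀], by simp [redPoly, hred]⟩

theorem card_roots_filter_norm_lt_one [IsAlgClosed k] {Q : (ringOfIntegers k)[X]}
    (hQ : redPoly k Q ≠ 0) :
    Multiset.card ((toPoly k Q).roots.filter fun x => ‖x‖ < 1) =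
      rootMultiplicity 0 (redPoly k Q) := by
  generalize hn : Multiset.card ((toPoly k Q).roots.filter fun x => ‖x‖ < 1) = n
  induction n generalizing Q with
  | zero =>
    rw [Multiset.card_eq_zero, Multiset.filter_eq_nil] at hn
    exact (rootMultiplicity_redPoly_eq_zero_of_one_le_norm_roots hQ
      fun r hr => not_lt.1 (hn r hr)).symm
  | succ n ih =>
    obtain ⟨r, hr⟩ := Multiset.card_pos_iff_exists_mem.1 (by rw [hn]; exact n.succ_pos)
    rw [Multiset.mem_filter] at hr
    obtain ⟨S, hQS, hred⟩ := exists_toPoly_eq_X_sub_C_mul hr.2 (isRoot_of_mem_roots hr.1)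
    have hS : redPoly k S ≠ 0 := right_ne_zero_of_mul (hred ▸ hQ)
    rw [hQS, roots_mul (hQS ▸ toPoly_ne_zero_of_redPoly_ne_zero hQ), roots_X_sub_C,
      Multiset.singleton_add, Multiset.filter_cons_of_pos (p := fun x => ‖x‖ < 1) _ hr.2,
      Multiset.card_cons] at hn
    have hX : rootMultiplicity 0 (X : (residueField k)[X]) = 1 := by
      simpa using rootMultiplicity_X_sub_C_self (x := (0 : residueField k))
    rw [hred, rootMultiplicity_mul (hred ▸ hQ), ← ih hS (Nat.succ_injective hn), hX, add_comm]

end ReductionModMaxIdeal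

namespace Polynomial

variable {R : Type*} [CommRing R]

theorem map_wronskian {S : Type*} [CommRing S] (φ : R →+* S) (a b : R[X]) :
    (wronskian a b).map φ = wronskian (a.map φ) (b.map φ) := by
  simp [wronskian, derivative_map]

theorem wronskian_mul_left (c a b : R[X]) :
    wronskian (c * a) (c * b) = c * c * wronskian a b := by
  simp only [wronskian, derivative_mul]
  ring

theorem eval_wronskian_ne_zero_of_rootMultiplicity_eq_one [IsDomain R] {a b : R[X]} {t : R}
    (ha : a.eval t ≠ 0) (hb : b.rootMultiplicity t = 1) : (wronskian a b).eval t ≠ 0 := by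
  have hb0 : b ≠ 0 := by
    rintro rfl
    simp at hb
  have hroot : b.IsRoot t := (rootMultiplicity_pos hb0).1 (by omega)
  have hder : ¬(derivative b).IsRoot t := fun h => by
    have := (one_lt_rootMultiplicity_iff_isRoot hb0).2 ⟨hroot, h⟩
    omega
  simpa [wronskian, hroot.eq_zero] using mul_ne_zero ha hder

end Polynomial

theorem critical_points_eq_twice_surplus [IsAlgClosed k]
    (f g : Polynomial (ringOfIntegers k))
    (hf0 : redPoly k f ≠ 0)
    (H f₁ g₁ : Polynomial (residueField k))
    (hHf : redPoly k f = H * f₁) (hHg : redPoly k g = H * g₁)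
    (hf₁ : rootMultiplicity 0 f₁ = 1) (hg₁ : g₁.eval 0 ≠ 0) :
    derivative (toPoly k f) * toPoly k g - toPoly k f * derivative (toPoly k g) ≠ 0 ∧
    Multiset.card
      ((derivative (toPoly k f) * toPoly k g -
          toPoly k f * derivative (toPoly k g)).roots.filter (fun x => ‖x‖ < 1)) =
      2 * rootMultiplicity 0 H := by
  have hW : toPoly k (wronskian g f) =
      derivative (toPoly k f) * toPoly k g - toPoly k f * derivative (toPoly k g) := by
    rw [toPoly, map_wronskian, ← toPoly, ← toPoly, wronskian]
    ring
  have hH : H ≠ 0 := left_ne_zero_of_mul (hHf ▸ hf0)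
  have hw : (wronskian g₁ f₁).eval 0 ≠ 0 :=
    eval_wronskian_ne_zero_of_rootMultiplicity_eq_one hg₁ hf₁
  have hred : redPoly k (wronskian g f) = H * H * wronskian g₁ f₁ := by
    rw [redPoly, map_wronskian, ← redPoly, ← redPoly, hHf, hHg, wronskian_mul_left]
  have hred0 : redPoly k (wronskian g f) ≠ 0 :=
    hred ▸ mul_ne_zero (mul_ne_zero hH hH) fun h => hw (by rw [h, eval_zero])
  rw [← hW, card_roots_filter_norm_lt_one hred0, hred, rootMultiplicity_mul (hred ▸ hred0),
    rootMultiplicity_mul (mul_ne_zero hH hH), rootMultiplicity_eq_zero hw, two_mul, add_zero]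
  exact ⟨toPoly_ne_zero_of_redPoly_ne_zero hred0, rfl⟩
end
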